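/- Assume all relations are ≤, that all off-diagonal elements of every B_k (0 ≤ k ≤ m) are nonnegative, and that the aggregated sparsity pattern graph G of B_0,...,B_m is bipartite. Then η(δ) = ζ(δ) for every δ ∈ ℝ^m. -/

import Mathlib

/-! The rank-one matrix `(u,1)(u,1)ᵀ` is SDP-feasible with the value of `u`, so `η ≤ ζ`.
Conversely, round an SDP-feasible `X` to `vᵢ = sᵢ √Xᵢᵢ`, where `s = ±1` comes from a
2-coloring of `G` normalised by `s_{n+1} = 1`. Then `vᵢ² = Xᵢᵢ`, and on every edge
`vᵢ vⱼ = -√(Xᵢᵢ Xⱼⱼ) ≤ Xᵢⱼ` by positive semidefiniteness; as the off-diagonal coefficients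
are nonnegative, `f_k(v) ≤ ⟨B_k, X⟩` for all `k`, so `v` is feasible with value at most
that of `X`. -/

open Matrix BigOperators

noncomputable section

/-- Trace inner product `⟨A,X⟩ = Σᵢⱼ Aᵢⱼ Xᵢⱼ`. -/
def mInner {N : ℕ} (A X : Matrix (Fin N) (Fin N) ℝ) : ℝ :=
  ∑ i, ∑ j, A i j * X i j

/-- The quadratic function `u ↦ (u,1)ᵀ B (u,1)` on `ℝⁿ`. -/
def quadF {n : ℕ} (B : Matrix (Fin (n + 1)) (Fin (n + 1)) ℝ) (u : Fin n → ℝ) : ℝ :=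
  Fin.snoc u 1 ⬝ᵥ (B *ᵥ Fin.snoc u 1)

/-- A relation on `ℝ` is standard if it is `≤`, `=`, or `≥`. -/
def IsStdRel (r : ℝ → ℝ → Prop) : Prop :=
  r = (· ≤ ·) ∨ r = (· = ·) ∨ r = (· ≥ ·)

section Single

variable (nn m : ℕ) (B : Fin (m + 1) → Matrix (Fin (nn + 1)) (Fin (nn + 1)) ℝ)

/-- Feasibility of `u` for QCQP(δ) (all relations `≤`). -/
def qcqpFeas (δ : Fin m → ℝ) (u : Fin nn → ℝ) : Prop :=
  ∀ k : Fin m, quadF (B k.succ) u ≤ δ k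

/-- The optimal value `ζ(δ)` of QCQP(δ). -/
def qcqpVal (δ : Fin m → ℝ) : EReal :=
  sInf {y : EReal | ∃ u : Fin nn → ℝ,
    qcqpFeas nn m B δ u ∧ y = ((quadF (B 0) u : ℝ) : EReal)}

/-- Feasibility of `X` for the Shor relaxation SDPR(δ). -/
def sdprFeas (δ : Fin m → ℝ) (X : Matrix (Fin (nn + 1)) (Fin (nn + 1)) ℝ) : Prop :=
  X.PosSemidef ∧ X (Fin.last nn) (Fin.last nn) = 1 ∧
    ∀ k : Fin m, mInner (B k.succ) X ≤ δ k

/-- The optimal value `η(δ)` of SDPR(δ). -/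
def sdprVal (δ : Fin m → ℝ) : EReal :=
  sInf {y : EReal | ∃ X : Matrix (Fin (nn + 1)) (Fin (nn + 1)) ℝ,
    sdprFeas nn m B δ X ∧ y = ((mInner (B 0) X : ℝ) : EReal)}

end Single

/-- The aggregated sparsity pattern graph of the matrices `B₀,…,Bₘ`: vertices
`{1,…,n+1}`, with an edge `{i,j}` (`i ≠ j`) whenever some `Bₖ` has a nonzero `(i,j)`
(or `(j,i)`) entry. -/
def aggGraph (nn m : ℕ) (B : Fin (m + 1) → Matrix (Fin (nn + 1)) (Fin (nn + 1)) ℝ) :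
    SimpleGraph (Fin (nn + 1)) where
  Adj i j := i ≠ j ∧ ∃ k, B k i j ≠ 0 ∨ B k j i ≠ 0
  symm := by
    constructor
    rintro i j ⟨hij, k, hk⟩
    exact ⟨hij.symm, k, hk.symm⟩
  loopless := by
    constructor
    rintro i ⟨h, -⟩
    exact h rfl

namespace Matrix.PosSemidef

variable {ι : Type*} [Fintype ι] {X : Matrix ι ι ℝ}

theorem apply_sq_le_mul_diag (hX : X.PosSemidef) (i j : ι) : X i j ^ 2 ≤ X i i * X j j := by
  classical
  rcases eq_or_ne i j with rfl | hij
  · exact (sq _).le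
  have hsymm : X j i = X i j := by simpa using hX.1.apply i j
  have hquad : ∀ t : ℝ, 0 ≤ X i i * (t * t) + 2 * X i j * t + X j j := by
    intro t
    have h := hX.dotProduct_mulVec_nonneg (Pi.single i t + Pi.single j 1)
    simp [mulVec_add, mulVec_single, add_dotProduct, dotProduct_add, hsymm] at h
    linarith
  have hdiscr := discrim_le_zero hquad
  rw [discrim] at hdiscr
  linarith

theorem neg_sqrt_mul_sqrt_le_apply (hX : X.PosSemidef) (i j : ι) :
    -(√(X i i) * √(X j j)) ≤ X i j := by
  rw [← Real.sqrt_mul hX.diag_nonneg, neg_le]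
  calc -X i j ≤ |X i j| := neg_le_abs _
    _ = √(X i j ^ 2) := (Real.sqrt_sq_eq_abs _).symm
    _ ≤ √(X i i * X j j) := Real.sqrt_le_sqrt (hX.apply_sq_le_mul_diag i j)

end Matrix.PosSemidef

section mInner

variable {N : ℕ}

theorem mInner_vecMulVec_self (A : Matrix (Fin N) (Fin N) ℝ) (v : Fin N → ℝ) :
    mInner A (vecMulVec v v) = v ⬝ᵥ (A *ᵥ v) := by
  simp only [mInner, vecMulVec_apply, dotProduct, mulVec, Finset.mul_sum]
  exact Finset.sum_congr rfl fun i _ => Finset.sum_congr rfl fun j _ => by ring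

theorem mInner_vecMulVec_signed_sqrt_diag_le {X A : Matrix (Fin N) (Fin N) ℝ}
    (hX : X.PosSemidef) {s : Fin N → ℝ} (hs : ∀ i, s i * s i = 1)
    (hA : ∀ i j, i ≠ j → 0 ≤ A i j) (hsA : ∀ i j, i ≠ j → A i j ≠ 0 → s i * s j = -1) :
    mInner A (vecMulVec (fun i => s i * √(X i i)) (fun i => s i * √(X i i))) ≤ mInner A X := by
  refine Finset.sum_le_sum fun i _ => Finset.sum_le_sum fun j _ => ?_
  rw [vecMulVec_apply, mul_mul_mul_comm]
  rcases eq_or_ne i j with rfl | hij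
  · rw [hs, one_mul, Real.mul_self_sqrt hX.diag_nonneg]
  rcases eq_or_ne (A i j) 0 with h0 | h0
  · simp [h0]
  rw [hsA i j hij h0, neg_one_mul]
  exact mul_le_mul_of_nonneg_left (hX.neg_sqrt_mul_sqrt_le_apply i j) (hA i j hij)

end mInner

section Relaxation

variable {nn m : ℕ} (B : Fin (m + 1) → Matrix (Fin (nn + 1)) (Fin (nn + 1)) ℝ)

theorem sdprVal_le_qcqpVal (δ : Fin m → ℝ) : sdprVal nn m B δ ≤ qcqpVal nn m B δ := by
  refine sInf_le_sInf_of_isCoinitialFor ?_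
  rintro y ⟨u, hu, rfl⟩
  have hquad : ∀ k, mInner (B k) (vecMulVec (Fin.snoc u 1) (Fin.snoc u 1)) = quadF (B k) u :=
    fun k => mInner_vecMulVec_self _ _
  refine ⟨_, ⟨vecMulVec (Fin.snoc u 1) (Fin.snoc u 1), ⟨?_, ?_, fun k => ?_⟩, rfl⟩, ?_⟩
  · simpa using posSemidef_vecMulVec_self_star (Fin.snoc u 1 : Fin (nn + 1) → ℝ)
  · simp [vecMulVec_apply]
  · exact (hquad k.succ).trans_le (hu k)
  · exact EReal.coe_le_coe (hquad 0).le

theorem qcqpVal_le_sdprVal_of_rounding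
    (hround : ∀ X : Matrix (Fin (nn + 1)) (Fin (nn + 1)) ℝ, X.PosSemidef →
      X (Fin.last nn) (Fin.last nn) = 1 → ∃ u, ∀ k, quadF (B k) u ≤ mInner (B k) X)
    (δ : Fin m → ℝ) : qcqpVal nn m B δ ≤ sdprVal nn m B δ := by
  refine sInf_le_sInf_of_isCoinitialFor ?_
  rintro y ⟨X, ⟨hX, hlast, hfeas⟩, rfl⟩
  obtain ⟨u, hu⟩ := hround X hX hlast
  exact ⟨_, ⟨u, fun k => (hu k.succ).trans (hfeas k), rfl⟩, EReal.coe_le_coe (hu 0)⟩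

end Relaxation

theorem exists_quadF_le_mInner_of_coloring {nn m : ℕ}
    {B : Fin (m + 1) → Matrix (Fin (nn + 1)) (Fin (nn + 1)) ℝ}
    (hoffdiag : ∀ (k : Fin (m + 1)) (i j : Fin (nn + 1)), i ≠ j → 0 ≤ B k i j)
    (C : (aggGraph nn m B).Coloring (Fin 2)) {X : Matrix (Fin (nn + 1)) (Fin (nn + 1)) ℝ}
    (hX : X.PosSemidef) (hlast : X (Fin.last nn) (Fin.last nn) = 1) :
    ∃ u, ∀ k, quadF (B k) u ≤ mInner (B k) X := by
  set s : Fin (nn + 1) → ℝ := fun i => if C i = C (Fin.last nn) then 1 else -1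
  set v : Fin (nn + 1) → ℝ := fun i => s i * √(X i i)
  have hs : ∀ i, s i * s i = 1 := fun i => by dsimp only [s]; split_ifs <;> norm_num
  have hs_edge : ∀ k i j, i ≠ j → B k i j ≠ 0 → s i * s j = -1 := by
    intro k i j hij h0
    have hC : C i ≠ C j := C.valid ⟨hij, k, Or.inl h0⟩
    -- of two distinct colours in `Fin 2`, exactly one is `C (Fin.last nn)`
    dsimp only [s]
    split_ifs <;> norm_num <;> omega
  have hv : Fin.snoc (Fin.init v) 1 = v := by
    simpa [v, s, hlast] using Fin.snoc_init_self v
  refine ⟨Fin.init v, fun k => ?_⟩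
  rw [quadF, hv, ← mInner_vecMulVec_self]
  exact mInner_vecMulVec_signed_sqrt_diag_le hX hs (hoffdiag k) (hs_edge k)

theorem bipartite_nonneg_sdpr_exact_general
    (nn m : ℕ)
    (B : Fin (m + 1) → Matrix (Fin (nn + 1)) (Fin (nn + 1)) ℝ)
    (hoffdiag : ∀ (k : Fin (m + 1)) (i j : Fin (nn + 1)), i ≠ j → 0 ≤ B k i j)
    (hbip : (aggGraph nn m B).Colorable 2) :
    ∀ δ : Fin m → ℝ, sdprVal nn m B δ = qcqpVal nn m B δ := by
  obtain ⟨C⟩ := hbip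
  intro δ
  exact le_antisymm (sdprVal_le_qcqpVal B δ) <| qcqpVal_le_sdprVal_of_rounding B
    (fun _ hX hlast => exists_quadF_le_mInner_of_coloring hoffdiag C hX hlast) δ

/-- **Corollary 4.4 (iii).** If all relations are `≤`, all off-diagonal entries of every
`Bₖ` are nonnegative, and the aggregated sparsity pattern graph is bipartite
(2-colorable), then `η(δ) = ζ(δ)` for every `δ`. -/
theorem bipartite_nonneg_sdpr_exact
    (nn m : ℕ) (hnn : 0 < nn) (hm : 0 < m)
    (B : Fin (m + 1) → Matrix (Fin (nn + 1)) (Fin (nn + 1)) ℝ)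
    (hBsymm : ∀ k, (B k).IsSymm)
    (hBcorner : ∀ k, B k (Fin.last nn) (Fin.last nn) = 0)
    (hoffdiag : ∀ (k : Fin (m + 1)) (i j : Fin (nn + 1)), i ≠ j → 0 ≤ B k i j)
    (hbip : (aggGraph nn m B).Colorable 2) :
    ∀ δ : Fin m → ℝ, sdprVal nn m B δ = qcqpVal nn m B δ :=
  bipartite_nonneg_sdpr_exact_general nn m B hoffdiag hbip
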